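/- arXiv:1507.07217 — 4 statements merged into one kernel-verified Lean document; each statement's English description precedes it below -/
import Mathlib

section
/- Let (G, 𝒫) be a path-encoding instance with integer optimum L*. Let ℓ^C be a real length assignment whose value is at most L* and such that ℓ^C(a) = 0 for every arc a that is the unique arc out of its tail vertex. Define ℓ^I(a) = ⌈ℓ^C(a)⌉ for every arc a and L^I = max_{p∈𝒫} ∑_{a∈p} ℓ^I(a). Then ℓ^I is an integer length assignment (i.e., it satisfies Kraft's inequality at every vertex) and L* ≤ L^I ≤ 2·L*. -/
open scoped Classical BigOperators

/-- A path-encoding instance: a finite directed multigraph together with a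
finite nonempty set of paths. A path is a nonempty finite sequence of arcs in
which the head of each arc equals the tail of the next, and a path contains
at most one arc out of any given vertex (the tails of its arcs are distinct). -/
structure PEInstance where
  V : Type
  A : Type
  [fintypeV : Fintype V]
  [fintypeA : Fintype A]
  tail : A → V
  head : A → V
  paths : Finset (List A)
  paths_nonempty : paths.Nonempty
  paths_valid : ∀ p ∈ paths, p ≠ [] ∧
    List.Chain' (fun a b => head a = tail b) p ∧ (p.map tail).Nodup

attribute [instance] PEInstance.fintypeV PEInstance.fintypeA

namespace PEInstance

variable (I : PEInstance)

/-- The set of arcs out of a vertex. -/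
noncomputable def out (v : I.V) : Finset I.A :=
  Finset.univ.filter fun a => I.tail a = v

/-- A real length assignment: Kraft's inequality holds at every vertex. -/
def KraftR (ℓ : I.A → ℝ) : Prop :=
  ∀ v : I.V, ∑ a ∈ I.out v, (2 : ℝ) ^ (-ℓ a) ≤ 1

/-- An integer length assignment: Kraft's inequality holds at every vertex. -/
def KraftZ (ℓ : I.A → ℤ) : Prop :=
  ∀ v : I.V, ∑ a ∈ I.out v, (2 : ℝ) ^ (-ℓ a) ≤ 1

/-- The value of a real length assignment: the largest encoded path length. -/
noncomputable def valueR (ℓ : I.A → ℝ) : ℝ :=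
  I.paths.sup' I.paths_nonempty fun p => (p.map ℓ).sum

/-- The value of an integer length assignment: the largest encoded path length. -/
noncomputable def valueZ (ℓ : I.A → ℤ) : ℤ :=
  I.paths.sup' I.paths_nonempty fun p => (p.map ℓ).sum

end PEInstance

private lemma list_sum_map_add {A : Type} (l : List A) (f g : A → ℝ) :
    (l.map (fun a => f a + g a)).sum = (l.map f).sum + (l.map g).sum := by
  induction l with
  | nil => simp
  | cons a l ih => simp [ih]; ring

/-- Let `(G, 𝒫)` be a path-encoding instance with integer optimum `L*`.
Let `ℓᶜ` be a real length assignment whose value is at most `L*` and such that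
`ℓᶜ a = 0` for every arc `a` that is the unique arc out of its tail vertex.
Define `ℓᴵ a = ⌈ℓᶜ a⌉` and `Lᴵ = max_{p ∈ 𝒫} ∑_{a ∈ p} ℓᴵ a`. Then `ℓᴵ` is an
integer length assignment (it satisfies Kraft's inequality at every vertex) and
`L* ≤ Lᴵ ≤ 2 L*`. -/
theorem optimal_path_encoding_rounding (I : PEInstance) (Lstar : ℤ)
    (hLstar : IsLeast {L : ℤ | ∃ ℓ : I.A → ℤ, I.KraftZ ℓ ∧ I.valueZ ℓ = L} Lstar)
    (ℓC : I.A → ℝ) (hℓC : I.KraftR ℓC)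
    (hval : I.valueR ℓC ≤ (Lstar : ℝ))
    (hzero : ∀ a : I.A, I.out (I.tail a) = {a} → ℓC a = 0)
    (ℓI : I.A → ℤ) (hℓI : ∀ a : I.A, ℓI a = ⌈ℓC a⌉)
    (LI : ℤ) (hLI : LI = I.valueZ ℓI) :
    I.KraftZ ℓI ∧ Lstar ≤ LI ∧ LI ≤ 2 * Lstar := by
  obtain ⟨⟨ℓS, hℓS, hℓSval⟩, hlb⟩ := hLstar
  -- Part 1: ℓI satisfies Kraft
  have hmono : ∀ a, (2:ℝ) ^ (-ℓI a) ≤ (2:ℝ) ^ (-ℓC a) := by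
    intro a
    rw [hℓI, show ((2:ℝ) ^ (-(⌈ℓC a⌉ : ℤ))) = (2:ℝ) ^ ((-(⌈ℓC a⌉ : ℤ) : ℤ) : ℝ) from
      (Real.rpow_intCast 2 _).symm]
    apply Real.rpow_le_rpow_of_exponent_le one_le_two
    push_cast
    linarith [Int.le_ceil (ℓC a)]
  have hK : I.KraftZ ℓI := fun v =>
    le_trans (Finset.sum_le_sum fun a _ => hmono a) (hℓC v)
  refine ⟨hK, hlb ⟨ℓI, hK, hLI.symm⟩, ?_⟩
  -- the "penalty" function
  set c : I.A → ℤ := fun a => if I.out (I.tail a) = {a} then 0 else 1 with hc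
  -- any integer Kraft assignment dominates c
  have hge : ∀ a : I.A, c a ≤ ℓS a := by
    intro a
    have ha : a ∈ I.out (I.tail a) := by simp [PEInstance.out]
    have hpos : ∀ b ∈ I.out (I.tail a), (0:ℝ) < 2 ^ (-ℓS b) :=
      fun b _ => zpow_pos two_pos _
    simp only [hc]
    split_ifs with h
    · -- 0 ≤ ℓS a
      have h1 : (2:ℝ) ^ (-ℓS a) ≤ 1 :=
        le_trans (Finset.single_le_sum (fun b hb => (hpos b hb).le) ha) (hℓS _)
      by_contra hneg
      push_neg at hneg
      have : (1:ℝ) < 2 ^ (-ℓS a) := one_lt_zpow₀ (by norm_num : (1:ℝ) < 2) (show (0:ℤ) < -ℓS a by omega)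
      linarith
    · -- 1 ≤ ℓS a
      obtain ⟨b, hb, hba⟩ : ∃ b ∈ I.out (I.tail a), b ≠ a := by
        by_contra hcon
        push_neg at hcon
        exact h (Finset.eq_singleton_iff_unique_mem.2 ⟨ha, hcon⟩)
      have hb' : b ∈ (I.out (I.tail a)).erase a := Finset.mem_erase.2 ⟨hba, hb⟩
      have h2 : (2:ℝ) ^ (-ℓS a) + (2:ℝ) ^ (-ℓS b) ≤ 1 := by
        have := Finset.add_sum_erase (I.out (I.tail a)) (fun x => (2:ℝ) ^ (-ℓS x)) ha
        have hsb : (2:ℝ) ^ (-ℓS b) ≤ ∑ x ∈ (I.out (I.tail a)).erase a, (2:ℝ) ^ (-ℓS x) :=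
          Finset.single_le_sum (fun x hx => (hpos x (Finset.mem_of_mem_erase hx)).le) hb'
        have := hℓS (I.tail a)
        rw [← Finset.add_sum_erase (I.out (I.tail a)) (fun x => (2:ℝ) ^ (-ℓS x)) ha] at this
        linarith
      by_contra hneg
      push_neg at hneg
      have : (1:ℝ) ≤ 2 ^ (-ℓS a) := one_le_zpow₀ one_le_two (by omega)
      linarith [hpos b hb]
  -- pointwise bound on the rounded lengths, as reals
  have hpt : ∀ a : I.A, ((ℓI a : ℝ)) ≤ ℓC a + (c a : ℝ) := by
    intro a
    rw [hℓI]
    simp only [hc]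
    split_ifs with h
    · rw [hzero a h]; simp
    · push_cast
      linarith [(Int.ceil_lt_add_one (ℓC a))]
  rw [hLI, PEInstance.valueZ]
  apply Finset.sup'_le
  intro p hp
  -- sum over the path
  have h1 : ((p.map ℓI).sum : ℝ) ≤ (p.map ℓC).sum + ((p.map c).sum : ℝ) := by
    have : ((p.map ℓI).sum : ℝ) = (p.map fun a => (ℓI a : ℝ)).sum := by
      rw [Int.cast_list_sum, List.map_map]; rfl
    rw [this]
    have : ((p.map c).sum : ℝ) = (p.map fun a => (c a : ℝ)).sum := by
      rw [Int.cast_list_sum, List.map_map]; rfl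
    rw [this, ← list_sum_map_add]
    exact List.sum_le_sum fun a _ => hpt a
  have h2 : (p.map ℓC).sum ≤ (Lstar : ℝ) :=
    le_trans (Finset.le_sup' (fun q => (q.map ℓC).sum) hp) hval
  have h3 : (p.map c).sum ≤ Lstar := by
    calc (p.map c).sum ≤ (p.map ℓS).sum := List.sum_le_sum fun a _ => hge a
    _ ≤ I.valueZ ℓS := Finset.le_sup' (fun q => (q.map ℓS).sum) hp
    _ = Lstar := hℓSval
  have h3' : ((p.map c).sum : ℝ) ≤ (Lstar : ℝ) := by exact_mod_cast h3
  have : ((p.map ℓI).sum : ℝ) ≤ 2 * (Lstar : ℝ) := by linarith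
  exact_mod_cast this
end

section
/- Let (G, 𝒫) be a path-encoding instance. For every dual feasible α and every real length assignment ℓ with value L, the dual objective satisfies D(α) ≤ L. In particular, sup{ D(α) : α dual feasible } ≤ L^C. -/
open scoped Classical BigOperators

namespace PEInstance

variable (I : PEInstance)

/-- A dual feasible point: a probability distribution `α` on the path set `𝒫`. -/
def DualFeasible (α : List I.A → ℝ) : Prop :=
  (∀ p ∈ I.paths, 0 ≤ α p) ∧ ∑ p ∈ I.paths, α p = 1

/-- `w a α = ∑_{p ∈ 𝒫 : a ∈ p} α p`, the total dual weight on the arc `a`. -/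
noncomputable def w (α : List I.A → ℝ) (a : I.A) : ℝ :=
  ∑ p ∈ I.paths.filter (fun p => a ∈ p), α p

/-- `W v α = ∑_{p ∈ 𝒫ᵥ} α p`, where `𝒫ᵥ` is the set of paths containing an arc
out of the vertex `v`. -/
noncomputable def W (α : List I.A → ℝ) (v : I.V) : ℝ :=
  ∑ p ∈ I.paths.filter (fun p => ∃ a ∈ I.out v, a ∈ p), α p

/-- The dual objective
`D α = -∑_{a ∈ A : w a > 0} (w a) · log₂ (w a / W (tail a))`. -/
noncomputable def D (α : List I.A → ℝ) : ℝ :=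
  -∑ a ∈ Finset.univ.filter (fun a => 0 < I.w α a),
      I.w α a * Real.logb 2 (I.w α a / I.W α (I.tail a))

end PEInstance

namespace PEInstance

variable (I : PEInstance)

lemma w_nonneg {α : List I.A → ℝ} (hα : I.DualFeasible α) (a : I.A) : 0 ≤ I.w α a :=
  Finset.sum_nonneg fun p hp => hα.1 p (Finset.mem_of_mem_filter p hp)

/-- In any path, there is at most one arc out of a given vertex. -/
lemma arc_out_unique {p : List I.A} (hp : p ∈ I.paths) {v : I.V} {a b : I.A}
    (ha : a ∈ I.out v) (hb : b ∈ I.out v) (hap : a ∈ p) (hbp : b ∈ p) : a = b := by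
  have hnd := (I.paths_valid p hp).2.2
  have hta : I.tail a = v := (Finset.mem_filter.mp ha).2
  have htb : I.tail b = v := (Finset.mem_filter.mp hb).2
  exact List.inj_on_of_nodup_map hnd hap hbp (by rw [hta, htb])

lemma sum_w_out {α : List I.A → ℝ} (v : I.V) :
    ∑ a ∈ I.out v, I.w α a = I.W α v := by
  classical
  unfold w W
  rw [Finset.sum_comm' (s := I.out v) (t := fun a => I.paths.filter (fun p => a ∈ p))
    (t' := I.paths.filter (fun p => ∃ a ∈ I.out v, a ∈ p))
    (s' := fun p => (I.out v).filter (fun a => a ∈ p))]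
  · apply Finset.sum_congr rfl
    intro p hp
    have hpI : p ∈ I.paths := Finset.mem_of_mem_filter p hp
    obtain ⟨a0, ha0, ha0p⟩ := (Finset.mem_filter.mp hp).2
    rw [Finset.sum_const, Finset.card_eq_one.mpr ⟨a0, ?_⟩, one_smul]
    ext b
    simp only [Finset.mem_filter, Finset.mem_singleton]
    constructor
    · rintro ⟨hb, hbp⟩; exact I.arc_out_unique hpI hb ha0 hbp ha0p
    · rintro rfl; exact ⟨ha0, ha0p⟩
  · intro a p
    simp only [Finset.mem_filter]
    constructor
    · rintro ⟨ha, hp, hap⟩; exact ⟨⟨ha, hap⟩, hp, a, ha, hap⟩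
    · rintro ⟨⟨ha, hap⟩, hp, _⟩; exact ⟨ha, hp, hap⟩

/-- Per-vertex entropy bound. -/
lemma vertex_bound {α : List I.A → ℝ} (hα : I.DualFeasible α)
    {ℓ : I.A → ℝ} (hℓ : I.KraftR ℓ) (v : I.V) :
    -∑ a ∈ (I.out v).filter (fun a => 0 < I.w α a),
        I.w α a * Real.logb 2 (I.w α a / I.W α v)
      ≤ ∑ a ∈ I.out v, I.w α a * ℓ a := by
  classical
  set S := (I.out v).filter (fun a => 0 < I.w α a) with hS
  have hS_sub : S ⊆ I.out v := Finset.filter_subset _ _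
  have hw0 : ∀ a ∈ I.out v, a ∉ S → I.w α a = 0 := by
    intro a ha haS
    have : ¬ 0 < I.w α a := fun h => haS (Finset.mem_filter.mpr ⟨ha, h⟩)
    exact le_antisymm (not_lt.mp this) (I.w_nonneg hα a)
  have hRHS : ∑ a ∈ I.out v, I.w α a * ℓ a = ∑ a ∈ S, I.w α a * ℓ a :=
    (Finset.sum_subset hS_sub (fun a ha haS => by rw [hw0 a ha haS, zero_mul])).symm
  have hWsum : I.W α v = ∑ a ∈ S, I.w α a := by
    rw [← I.sum_w_out v]
    exact (Finset.sum_subset hS_sub hw0).symm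
  rcases S.eq_empty_or_nonempty with hSe | hSne
  · rw [hRHS, hSe]; simp
  · have hwpos : ∀ a ∈ S, 0 < I.w α a := fun a ha => (Finset.mem_filter.mp ha).2
    have hW : 0 < I.W α v := hWsum ▸ Finset.sum_pos hwpos hSne
    have hlog2 : (0:ℝ) < Real.log 2 := Real.log_pos (by norm_num)
    -- key inequality
    have key : ∑ a ∈ S, I.w α a *
        Real.logb 2 (I.W α v * (2:ℝ) ^ (-ℓ a) / I.w α a) ≤ 0 := by
      have step : ∀ a ∈ S, I.w α a *
          Real.logb 2 (I.W α v * (2:ℝ) ^ (-ℓ a) / I.w α a)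
            ≤ (I.W α v * (2:ℝ) ^ (-ℓ a) - I.w α a) / Real.log 2 := by
        intro a ha
        have hwa := hwpos a ha
        have hq : (0:ℝ) < (2:ℝ) ^ (-ℓ a) := Real.rpow_pos_of_pos (by norm_num) _
        have hx : (0:ℝ) < I.W α v * (2:ℝ) ^ (-ℓ a) / I.w α a := by positivity
        have hlog := Real.log_le_sub_one_of_pos hx
        rw [Real.logb, ← mul_div_assoc]
        rw [div_le_div_iff_of_pos_right hlog2]
        calc I.w α a * Real.log (I.W α v * (2:ℝ) ^ (-ℓ a) / I.w α a)
            ≤ I.w α a * (I.W α v * (2:ℝ) ^ (-ℓ a) / I.w α a - 1) := by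
              exact mul_le_mul_of_nonneg_left hlog hwa.le
          _ = I.W α v * (2:ℝ) ^ (-ℓ a) - I.w α a := by
              field_simp
      calc ∑ a ∈ S, I.w α a * Real.logb 2 (I.W α v * (2:ℝ) ^ (-ℓ a) / I.w α a)
          ≤ ∑ a ∈ S, (I.W α v * (2:ℝ) ^ (-ℓ a) - I.w α a) / Real.log 2 :=
            Finset.sum_le_sum step
        _ = (I.W α v * ∑ a ∈ S, (2:ℝ) ^ (-ℓ a) - I.W α v) / Real.log 2 := by
            rw [← Finset.sum_div, Finset.sum_sub_distrib, ← Finset.mul_sum, ← hWsum]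
        _ ≤ 0 := by
            apply div_nonpos_of_nonpos_of_nonneg _ hlog2.le
            have hq1 : ∑ a ∈ S, (2:ℝ) ^ (-ℓ a) ≤ 1 := by
              refine le_trans (Finset.sum_le_sum_of_subset_of_nonneg hS_sub ?_) (hℓ v)
              intro a _ _
              exact (Real.rpow_pos_of_pos (by norm_num) _).le
            nlinarith
    -- rewrite each term of key
    have rw_term : ∀ a ∈ S, I.w α a *
        Real.logb 2 (I.W α v * (2:ℝ) ^ (-ℓ a) / I.w α a)
          = -(I.w α a * ℓ a) - I.w α a * Real.logb 2 (I.w α a / I.W α v) := by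
      intro a ha
      have hwa := hwpos a ha
      have hq : (0:ℝ) < (2:ℝ) ^ (-ℓ a) := Real.rpow_pos_of_pos (by norm_num) _
      have e1 : Real.logb 2 (I.W α v * (2:ℝ) ^ (-ℓ a) / I.w α a)
          = Real.logb 2 (I.W α v) + (-ℓ a) - Real.logb 2 (I.w α a) := by
        rw [Real.logb_div (by positivity) hwa.ne',
          Real.logb_mul hW.ne' hq.ne', Real.logb_rpow (by norm_num) (by norm_num)]
      have e2 : Real.logb 2 (I.w α a / I.W α v)
          = Real.logb 2 (I.w α a) - Real.logb 2 (I.W α v) :=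
        Real.logb_div hwa.ne' hW.ne'
      rw [e1, e2]; ring
    rw [Finset.sum_congr rfl rw_term, Finset.sum_sub_distrib, Finset.sum_neg_distrib] at key
    rw [hRHS]
    linarith

/-- The core weak duality inequality. -/
lemma weak_duality_aux {α : List I.A → ℝ} (hα : I.DualFeasible α)
    {ℓ : I.A → ℝ} (hℓ : I.KraftR ℓ) : I.D α ≤ I.valueR ℓ := by
  classical
  have fiber : ∀ f : I.A → ℝ, ∀ s : Finset I.A,
      ∑ a ∈ s, f a = ∑ v : I.V, ∑ a ∈ s.filter (fun a => I.tail a = v), f a :=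
    fun f s => (Finset.sum_fiberwise s I.tail f).symm
  -- Step 1: D α ≤ ∑_a w a * ℓ a
  have step1 : I.D α ≤ ∑ a : I.A, I.w α a * ℓ a := by
    unfold D
    rw [fiber _ (Finset.univ.filter (fun a => 0 < I.w α a)),
        fiber (fun a => I.w α a * ℓ a) Finset.univ, ← Finset.sum_neg_distrib]
    apply Finset.sum_le_sum
    intro v _
    have hset : (Finset.univ.filter (fun a => 0 < I.w α a)).filter (fun a => I.tail a = v)
        = (I.out v).filter (fun a => 0 < I.w α a) := by
      unfold out
      rw [Finset.filter_filter, Finset.filter_filter]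
      exact Finset.filter_congr (by tauto)
    have hset2 : Finset.univ.filter (fun a => I.tail a = v) = I.out v := rfl
    rw [hset, hset2]
    calc -∑ a ∈ (I.out v).filter (fun a => 0 < I.w α a),
            I.w α a * Real.logb 2 (I.w α a / I.W α (I.tail a))
        = -∑ a ∈ (I.out v).filter (fun a => 0 < I.w α a),
            I.w α a * Real.logb 2 (I.w α a / I.W α v) := by
          congr 1
          apply Finset.sum_congr rfl
          intro a ha
          rw [(Finset.mem_filter.mp (Finset.mem_filter.mp ha).1).2]
      _ ≤ ∑ a ∈ I.out v, I.w α a * ℓ a := I.vertex_bound hα hℓ v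
  -- Step 2: ∑_a w a * ℓ a = ∑_p α p * (p.map ℓ).sum
  have step2 : ∑ a : I.A, I.w α a * ℓ a = ∑ p ∈ I.paths, α p * (p.map ℓ).sum := by
    unfold w
    calc ∑ a : I.A, (∑ p ∈ I.paths.filter (fun p => a ∈ p), α p) * ℓ a
        = ∑ a : I.A, ∑ p ∈ I.paths, if a ∈ p then α p * ℓ a else 0 := by
          apply Finset.sum_congr rfl
          intro a _
          rw [Finset.sum_mul, Finset.sum_filter]
      _ = ∑ p ∈ I.paths, ∑ a : I.A, if a ∈ p then α p * ℓ a else 0 :=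
          Finset.sum_comm
      _ = ∑ p ∈ I.paths, α p * (p.map ℓ).sum := by
          apply Finset.sum_congr rfl
          intro p hp
          have hnd : p.Nodup := ((I.paths_valid p hp).2.2).of_map _
          have hfe : Finset.univ.filter (fun a => a ∈ p) = p.toFinset := by
            ext a; simp [List.mem_toFinset]
          rw [← Finset.sum_filter, hfe, ← Finset.mul_sum, List.sum_toFinset ℓ hnd]
  -- Step 3: ∑_p α p * (p.map ℓ).sum ≤ valueR ℓ
  have step3 : ∑ p ∈ I.paths, α p * (p.map ℓ).sum ≤ I.valueR ℓ := by
    calc ∑ p ∈ I.paths, α p * (p.map ℓ).sum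
        ≤ ∑ p ∈ I.paths, α p * I.valueR ℓ := by
          apply Finset.sum_le_sum
          intro p hp
          exact mul_le_mul_of_nonneg_left
            (Finset.le_sup' (fun p => (p.map ℓ).sum) hp) (hα.1 p hp)
      _ = I.valueR ℓ := by rw [← Finset.sum_mul, hα.2, one_mul]
  linarith [step1, step2 ▸ step3]

end PEInstance

/-- **weak duality.** Let `(G, 𝒫)` be a path-encoding instance. For
every dual feasible `α` and every real length assignment `ℓ` with value `L`, the
dual objective satisfies `D α ≤ L`. In particular,
`sup { D α : α dual feasible } ≤ L^C`, where `L^C` is the infimum of the value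
over all real length assignments. -/
theorem weak_duality_path_encoding (I : PEInstance)
    (α : List I.A → ℝ) (hα : I.DualFeasible α)
    (ℓ : I.A → ℝ) (hℓ : I.KraftR ℓ) (L : ℝ) (hL : L = I.valueR ℓ) :
    I.D α ≤ L ∧
    sSup {d : ℝ | ∃ β : List I.A → ℝ, I.DualFeasible β ∧ I.D β = d} ≤
      sInf {L' : ℝ | ∃ m : I.A → ℝ, I.KraftR m ∧ I.valueR m = L'} := by
  refine ⟨hL ▸ I.weak_duality_aux hα hℓ, ?_⟩
  refine le_csInf ⟨I.valueR ℓ, ?_⟩ ?_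
  · exact ⟨ℓ, hℓ, rfl⟩
  rintro L' ⟨m, hm, rfl⟩
  refine csSup_le ⟨I.D α, ?_⟩ ?_
  · exact ⟨α, hα, rfl⟩
  rintro d ⟨β, hβ, rfl⟩
  exact I.weak_duality_aux hβ hm
end

section
/- Let (G, 𝒫) be a path-encoding instance and α a dual feasible point. Then the dual objective equals the α-average encoded path length under the recovered lengths: D(α) = ∑_{p∈𝒫, α_p>0} α_p · ∑_{a∈p} log₂( W_{tail(a)}(α) / w_a(α) ) (note that for α_p > 0 every arc a ∈ p has w_a(α) ≥ α_p > 0, so each summand is well defined). Consequently, D(α) ≤ max over paths p with α_p > 0 of ∑_{a∈p} log₂( W_{tail(a)}(α) / w_a(α) ). -/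
open scoped Classical BigOperators

/-- Let `(G, 𝒫)` be a path-encoding instance and `α` a dual
feasible point. Then the dual objective equals the `α`-average encoded path
length under the recovered lengths:
`D α = ∑_{p ∈ 𝒫, α p > 0} α p · ∑_{a ∈ p} log₂ (W (tail a) / w a)`
(for `α p > 0` every arc `a ∈ p` has `w a ≥ α p > 0`, so each summand is well
defined). Consequently, `D α` is at most the maximum, over paths `p` with
`α p > 0`, of `∑_{a ∈ p} log₂ (W (tail a) / w a)`. -/
theorem dual_objective_as_average_path_length (I : PEInstance)
    (α : List I.A → ℝ) (hα : I.DualFeasible α) :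
    I.D α = (∑ p ∈ I.paths.filter (fun p => 0 < α p),
        α p * (p.map fun a => Real.logb 2 (I.W α (I.tail a) / I.w α a)).sum) ∧
    ∃ hne : (I.paths.filter (fun p => 0 < α p)).Nonempty,
      I.D α ≤ (I.paths.filter (fun p => 0 < α p)).sup' hne
        (fun p => (p.map fun a => Real.logb 2 (I.W α (I.tail a) / I.w α a)).sum) := by
  classical
  obtain ⟨hα0, hα1⟩ := hα
  set f : I.A → ℝ := fun a => Real.logb 2 (I.W α (I.tail a) / I.w α a) with hf
  set S : Finset I.A := Finset.univ.filter (fun a => 0 < I.w α a) with hS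
  have hwpos : ∀ p ∈ I.paths, 0 < α p → ∀ a ∈ p, 0 < I.w α a := by
    intro p hp hpa a ha
    have h1 : α p ≤ I.w α a := by
      apply Finset.single_le_sum (f := α)
      · intro q hq; exact hα0 q (Finset.mem_filter.mp hq).1
      · exact Finset.mem_filter.mpr ⟨hp, ha⟩
    linarith
  have hnodup : ∀ p ∈ I.paths, p.Nodup := fun p hp =>
    List.Nodup.of_map _ ((I.paths_valid p hp).2.2)
  have hmain : I.D α = ∑ p ∈ I.paths.filter (fun p => 0 < α p),
      α p * (p.map f).sum := by
    have step1 : ∀ a ∈ S, -(I.w α a * Real.logb 2 (I.w α a / I.W α (I.tail a)))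
        = I.w α a * f a := by
      intro a _
      have h2 : I.w α a / I.W α (I.tail a) = (I.W α (I.tail a) / I.w α a)⁻¹ := by
        rw [inv_div]
      rw [h2, Real.logb_inv, hf]; ring
    have step2 : ∀ a ∈ S, I.w α a * f a
        = ∑ p ∈ I.paths, (if a ∈ p then α p * f a else 0) := by
      intro a _
      rw [PEInstance.w, Finset.sum_mul, ← Finset.sum_filter]
    calc I.D α = ∑ a ∈ S, -(I.w α a * Real.logb 2 (I.w α a / I.W α (I.tail a))) := by
          rw [PEInstance.D, ← Finset.sum_neg_distrib]
      _ = ∑ a ∈ S, I.w α a * f a := Finset.sum_congr rfl step1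
      _ = ∑ a ∈ S, ∑ p ∈ I.paths, (if a ∈ p then α p * f a else 0) :=
          Finset.sum_congr rfl step2
      _ = ∑ p ∈ I.paths, ∑ a ∈ S, (if a ∈ p then α p * f a else 0) :=
          Finset.sum_comm
      _ = ∑ p ∈ I.paths, α p * ∑ a ∈ S.filter (fun a => a ∈ p), f a := by
          refine Finset.sum_congr rfl fun p hp => ?_
          rw [← Finset.sum_filter, Finset.mul_sum]
      _ = ∑ p ∈ I.paths.filter (fun p => 0 < α p),
            α p * ∑ a ∈ S.filter (fun a => a ∈ p), f a := by
          rw [Finset.sum_filter_of_ne]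
          intro p hp hne
          rcases lt_or_eq_of_le (hα0 p hp) with h | h
          · exact h
          · exact absurd (by rw [← h]; ring) hne
      _ = ∑ p ∈ I.paths.filter (fun p => 0 < α p), α p * (p.map f).sum := by
          refine Finset.sum_congr rfl fun p hp => ?_
          obtain ⟨hp1, hp2⟩ := Finset.mem_filter.mp hp
          have hfe : S.filter (fun a => a ∈ p) = p.toFinset := by
            ext a
            simp only [hS, Finset.mem_filter, Finset.mem_univ, true_and,
              List.mem_toFinset]
            exact ⟨fun h => h.2, fun h => ⟨hwpos p hp1 hp2 a h, h⟩⟩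
          rw [hfe, List.sum_toFinset _ (hnodup p hp1)]
  have hne : (I.paths.filter (fun p => 0 < α p)).Nonempty := by
    by_contra h
    rw [Finset.not_nonempty_iff_eq_empty] at h
    have : ∑ p ∈ I.paths, α p = 0 := by
      apply Finset.sum_eq_zero
      intro p hp
      rcases lt_or_eq_of_le (hα0 p hp) with h2 | h2
      · have hmem : p ∈ I.paths.filter (fun p => 0 < α p) :=
          Finset.mem_filter.mpr ⟨hp, h2⟩
        rw [h] at hmem
        exact absurd hmem (Finset.notMem_empty p)
      · exact h2.symm
    rw [hα1] at this; norm_num at this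
  refine ⟨hmain, hne, ?_⟩
  have hsum1 : ∑ p ∈ I.paths.filter (fun p => 0 < α p), α p = 1 := by
    rw [← hα1]
    apply Finset.sum_filter_of_ne
    intro p hp hne2
    rcases lt_or_eq_of_le (hα0 p hp) with h | h
    · exact h
    · exact absurd h.symm hne2
  rw [hmain]
  calc ∑ p ∈ I.paths.filter (fun p => 0 < α p), α p * (p.map f).sum
      ≤ ∑ p ∈ I.paths.filter (fun p => 0 < α p),
          α p * ((I.paths.filter (fun p => 0 < α p)).sup' hne
            fun p => (p.map f).sum) := by
        apply Finset.sum_le_sum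
        intro p hp
        exact mul_le_mul_of_nonneg_left
          (Finset.le_sup' (fun p => (p.map f).sum) hp)
          (le_of_lt (Finset.mem_filter.mp hp).2)
    _ = (I.paths.filter (fun p => 0 < α p)).sup' hne
          fun p => (p.map f).sum := by
        rw [← Finset.sum_mul, hsum1, one_mul]
end

section
/- Let (G, 𝒫) be a path-encoding instance and α a dual feasible point with M(α) := ∑_{p∈𝒫} |p|·α_p > 0. Define a random arc A with ℙ(A = a) = w_a(α)/M(α) for each arc a, the random vertex V = tail(A), and an independent random path P with ℙ(P = p) = α_p. Then the dual objective satisfies D(α) = 𝔼[|P|] · H(A | V), where 𝔼[|P|] = M(α) and H(A | V) is the conditional Shannon entropy (base 2) of A given V. -/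
open scoped Classical BigOperators

/-- **entropy form of the dual.** Let `(G, 𝒫)` be a path-encoding
instance and `α` a dual feasible point with `M = ∑_{p ∈ 𝒫} |p| · α p > 0`.
Define a random arc `A` with `ℙ(A = a) = w a / M`, the random vertex
`V = tail A` (so `ℙ(V = v) = ∑_{a ∈ out v} ℙ(A = a)`), and an independent random
path `P` with `ℙ(P = p) = α p` (so `𝔼|P| = M`). Then the dual objective
satisfies `D α = 𝔼|P| · H(A | V)`, where `H(A | V)` is the conditional Shannon
entropy (base 2) of `A` given `V`:
`H(A|V) = ∑_v ℙ(V = v) · (-∑_{a ∈ out v} ℙ(A = a | V = v) log₂ ℙ(A = a | V = v))`. -/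
theorem dual_objective_entropy_form (I : PEInstance)
    (α : List I.A → ℝ) (hα : I.DualFeasible α)
    (M : ℝ) (hMdef : M = ∑ p ∈ I.paths, (p.length : ℝ) * α p) (hM : 0 < M)
    (PA : I.A → ℝ) (hPA : ∀ a : I.A, PA a = I.w α a / M)
    (PV : I.V → ℝ) (hPV : ∀ v : I.V, PV v = ∑ a ∈ I.out v, PA a) :
    I.D α = M *
      ∑ v : I.V, PV v *
        (-∑ a ∈ I.out v, (PA a / PV v) * Real.logb 2 (PA a / PV v)) := by

  classical
  have hwnn : ∀ a : I.A, 0 ≤ I.w α a := fun a =>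
    Finset.sum_nonneg fun p hp => hα.1 p (Finset.mem_filter.mp hp).1
  -- W v = ∑ a ∈ out v, w a
  have hWsum : ∀ v : I.V, I.W α v = ∑ a ∈ I.out v, I.w α a := by
    intro v
    unfold PEInstance.W PEInstance.w
    rw [Finset.sum_filter]
    have : ∀ a ∈ I.out v, ∑ p ∈ I.paths.filter (fun p => a ∈ p), α p
        = ∑ p ∈ I.paths, if a ∈ p then α p else 0 := by
      intro a _; rw [Finset.sum_filter]
    rw [Finset.sum_congr rfl this, Finset.sum_comm]
    refine Finset.sum_congr rfl fun p hp => ?_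
    have hnd := ((I.paths_valid p hp).2.2)
    have hcard : ((I.out v).filter (fun a => a ∈ p)).card ≤ 1 := by
      rw [Finset.card_le_one]
      intro a ha b hb
      simp only [Finset.mem_filter, PEInstance.out, Finset.mem_univ, true_and] at ha hb
      exact List.inj_on_of_nodup_map hnd ha.2 hb.2 (ha.1.trans hb.1.symm)
    rw [← Finset.sum_filter]
    by_cases h : ∃ a ∈ I.out v, a ∈ p
    · rw [if_pos h]
      obtain ⟨a, ha, hap⟩ := h
      have hne : ((I.out v).filter (fun a => a ∈ p)).Nonempty :=
        ⟨a, Finset.mem_filter.mpr ⟨ha, hap⟩⟩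
      have hc1 : ((I.out v).filter (fun a => a ∈ p)).card = 1 :=
        le_antisymm hcard (Finset.card_pos.mpr hne)
      obtain ⟨b, hb⟩ := Finset.card_eq_one.mp hc1
      rw [hb, Finset.sum_singleton]
    · rw [if_neg h]
      have : (I.out v).filter (fun a => a ∈ p) = ∅ := by
        rw [Finset.filter_eq_empty_iff]
        intro a ha hap; exact h ⟨a, ha, hap⟩
      rw [this, Finset.sum_empty]
  -- M = ∑ a, w a
  have hMsum : M = ∑ a : I.A, I.w α a := by
    rw [hMdef]
    unfold PEInstance.w
    have : ∀ a : I.A, ∑ p ∈ I.paths.filter (fun p => a ∈ p), α p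
        = ∑ p ∈ I.paths, if a ∈ p then α p else 0 := fun a => Finset.sum_filter _ _
    rw [Finset.sum_congr rfl (fun a _ => this a), Finset.sum_comm]
    refine Finset.sum_congr rfl fun p hp => ?_
    have hnd : p.Nodup := (List.Nodup.of_map _ (I.paths_valid p hp).2.2)
    symm
    simp only [← List.mem_toFinset]
    rw [Finset.sum_ite_mem, Finset.univ_inter, Finset.sum_const, nsmul_eq_mul,
      List.toFinset_card_of_nodup hnd]
  have hMne : M ≠ 0 := ne_of_gt hM
  -- PV v = W v / M
  have hPVW : ∀ v : I.V, PV v = I.W α v / M := by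
    intro v
    rw [hPV, hWsum, Finset.sum_div]
    exact Finset.sum_congr rfl fun a _ => hPA a
  -- rewrite D as a sum over all arcs
  have hD : I.D α = -∑ a : I.A, I.w α a * Real.logb 2 (I.w α a / I.W α (I.tail a)) := by
    unfold PEInstance.D
    congr 1
    rw [Finset.sum_filter_of_ne]
    intro a _ h
    rcases lt_or_eq_of_le (hwnn a) with hlt | heq
    · exact hlt
    · exact absurd (by rw [← heq, zero_mul]) h
  rw [hD]
  -- rewrite RHS
  rw [Finset.mul_sum]
  have key : ∀ v : I.V,
      M * (PV v * (-∑ a ∈ I.out v, (PA a / PV v) * Real.logb 2 (PA a / PV v)))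
      = -∑ a ∈ I.out v, I.w α a * Real.logb 2 (I.w α a / I.W α (I.tail a)) := by
    intro v
    rw [mul_neg, mul_neg, neg_inj, Finset.mul_sum, Finset.mul_sum]
    refine Finset.sum_congr rfl fun a ha => ?_
    have htail : I.tail a = v := by
      simpa [PEInstance.out] using ha
    rw [htail]
    rcases lt_or_eq_of_le (hwnn a) with hwa | hwa
    · -- w a > 0
      have hWv : I.w α a ≤ I.W α v := by
        rw [hWsum]
        exact Finset.single_le_sum (fun b _ => hwnn b) ha
      have hWpos : 0 < I.W α v := lt_of_lt_of_le hwa hWv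
      have hPVv : PV v = I.W α v / M := hPVW v
      have hPVpos : PV v ≠ 0 := by
        rw [hPVv]; positivity
      have hratio : PA a / PV v = I.w α a / I.W α v := by
        rw [hPA, hPVv]
        field_simp
      rw [hratio]
      have : M * (PV v * (I.w α a / I.W α v * Real.logb 2 (I.w α a / I.W α v)))
          = (M * PV v * (I.w α a / I.W α v)) * Real.logb 2 (I.w α a / I.W α v) := by ring
      rw [this, hPVv]
      have hWne : I.W α v ≠ 0 := ne_of_gt hWpos
      field_simp
    · -- w a = 0
      rw [← hwa, zero_mul]
      have : PA a = 0 := by rw [hPA, ← hwa, zero_div]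
      rw [this, zero_div, zero_mul, mul_zero, mul_zero]
  rw [Finset.sum_congr rfl fun v _ => key v]
  rw [Finset.sum_neg_distrib, neg_inj]
  simp only [PEInstance.out]
  exact (Finset.sum_fiberwise Finset.univ I.tail _).symm
end
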